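/- arXiv:1405.4002 — 5 statements merged into one kernel-verified Lean document; each statement's English description precedes it below -/
import Mathlib

section
/- For all bounded functions v, w : ℝ^s → ℝ, the Bellman operator satisfies ‖Γ(v) − Γ(w)‖_∞ ≤ e^{−δ} ‖v − w‖_∞, i.e. Γ is Lipschitz with constant e^{−δ} < 1 with respect to the supremum norm. -/
/-! On `Ω \ T` both `Γ v` and `Γ w` are suprema over `U` of the discounted values
`e^{-c(x,u)} v̄(f(x,u))` and `e^{-c(x,u)} w̄(f(x,u))`. Pointwise in `u` these differ by at most
`e^{-δ} ‖v̄ - w̄‖_∞ ≤ e^{-δ} ‖v - w‖_∞`, and two suprema over the same nonempty index set differ by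
at most the sup of the pointwise differences. On `T` and off `Ω` the two images coincide. -/

open Classical in
/-- The Kružkov-transformed Bellman operator. -/
noncomputable def bellman {s d : ℕ}
    (Om T : Set (EuclideanSpace ℝ (Fin s))) (U : Set (EuclideanSpace ℝ (Fin d)))
    (f : EuclideanSpace ℝ (Fin s) → EuclideanSpace ℝ (Fin d) → EuclideanSpace ℝ (Fin s))
    (c : EuclideanSpace ℝ (Fin s) → EuclideanSpace ℝ (Fin d) → ℝ)
    (v : EuclideanSpace ℝ (Fin s) → ℝ) :
    EuclideanSpace ℝ (Fin s) → ℝ :=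
  fun x =>
    if x ∈ T then 1
    else if x ∈ Om then
      sSup ((fun u => Real.exp (-c x u) * (if f x u ∈ T then 1 else v (f x u))) '' U)
    else 0

open Real Set

section SupDifference

variable {α : Type*} {U : Set α} {g h : α → ℝ} {K : ℝ}

lemma csSup_image_le_csSup_image_add (hU : U.Nonempty) (hh : BddAbove (h '' U))
    (hgh : ∀ u ∈ U, g u ≤ h u + K) : sSup (g '' U) ≤ sSup (h '' U) + K := by
  refine csSup_le (hU.image g) ?_
  rintro _ ⟨u, hu, rfl⟩
  exact (hgh u hu).trans (add_le_add_left (le_csSup hh ⟨u, hu, rfl⟩) K)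

lemma abs_csSup_image_sub_csSup_image_le (hU : U.Nonempty) (hg : BddAbove (g '' U))
    (hh : BddAbove (h '' U)) (hgh : ∀ u ∈ U, |g u - h u| ≤ K) :
    |sSup (g '' U) - sSup (h '' U)| ≤ K := by
  have hle := fun u hu => abs_sub_le_iff.mp (hgh u hu)
  have h₁ : sSup (g '' U) ≤ sSup (h '' U) + K :=
    csSup_image_le_csSup_image_add hU hh fun u hu => by linarith [hle u hu]
  have h₂ : sSup (h '' U) ≤ sSup (g '' U) + K :=
    csSup_image_le_csSup_image_add hU hg fun u hu => by linarith [hle u hu]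
  exact abs_sub_le_iff.mpr ⟨by linarith, by linarith⟩

end SupDifference

lemma abs_exp_neg_mul_le_of_le {δ c a : ℝ} (h : δ ≤ c) : |exp (-c) * a| ≤ exp (-δ) * |a| := by
  rw [abs_mul, abs_of_pos (exp_pos _)]
  gcongr

open Classical in
/-- The paper's `v̄`. -/
noncomputable def extendByOne {β : Type*} (T : Set β) (v : β → ℝ) : β → ℝ :=
  fun y => if y ∈ T then 1 else v y

section ExtendByOne

variable {β : Type*} {T : Set β} {v w : β → ℝ}

lemma abs_extendByOne_le {M : ℝ} (hv : ∀ y, |v y| ≤ M) (y : β) :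
    |extendByOne T v y| ≤ max 1 M := by
  unfold extendByOne
  split_ifs
  · simp
  · exact (hv y).trans (le_max_right _ _)

lemma abs_extendByOne_sub_le {K : ℝ} (hK : ∀ y, |v y - w y| ≤ K) (hK0 : 0 ≤ K) (y : β) :
    |extendByOne T v y - extendByOne T w y| ≤ K := by
  unfold extendByOne
  split_ifs
  · simpa using hK0
  · exact hK y

end ExtendByOne

section Bellman

variable {s d : ℕ} {Om T : Set (EuclideanSpace ℝ (Fin s))} {U : Set (EuclideanSpace ℝ (Fin d))}
  {f : EuclideanSpace ℝ (Fin s) → EuclideanSpace ℝ (Fin d) → EuclideanSpace ℝ (Fin s)}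
  {c : EuclideanSpace ℝ (Fin s) → EuclideanSpace ℝ (Fin d) → ℝ} {δ : ℝ}
  {v w : EuclideanSpace ℝ (Fin s) → ℝ}

lemma bellman_of_mem_diff {x : EuclideanSpace ℝ (Fin s)} (hx : x ∈ Om \ T) :
    bellman Om T U f c v x = sSup ((fun u => exp (-c x u) * extendByOne T v (f x u)) '' U) := by
  simp only [bellman, hx.1, hx.2, if_false, if_true]
  rfl

lemma bddAbove_discounted_image {x : EuclideanSpace ℝ (Fin s)} (hcδ : ∀ u ∈ U, δ ≤ c x u)
    {M : ℝ} (hv : ∀ y, |v y| ≤ M) :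
    BddAbove ((fun u => exp (-c x u) * extendByOne T v (f x u)) '' U) := by
  refine ⟨exp (-δ) * max 1 M, ?_⟩
  rintro _ ⟨u, hu, rfl⟩
  calc exp (-c x u) * extendByOne T v (f x u)
      ≤ |exp (-c x u) * extendByOne T v (f x u)| := le_abs_self _
    _ ≤ exp (-δ) * |extendByOne T v (f x u)| := abs_exp_neg_mul_le_of_le (hcδ u hu)
    _ ≤ exp (-δ) * max 1 M := by gcongr; exact abs_extendByOne_le hv _

lemma abs_bellman_sub_le (hU : U.Nonempty) (hcδ : ∀ x ∈ Om \ T, ∀ u ∈ U, δ ≤ c x u)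
    {Mv Mw K : ℝ} (hv : ∀ y, |v y| ≤ Mv) (hw : ∀ y, |w y| ≤ Mw) (hK : ∀ y, |v y - w y| ≤ K)
    (x : EuclideanSpace ℝ (Fin s)) :
    |bellman Om T U f c v x - bellman Om T U f c w x| ≤ exp (-δ) * K := by
  have hK0 : 0 ≤ K := (abs_nonneg _).trans (hK 0)
  have hRHS : 0 ≤ exp (-δ) * K := by positivity
  by_cases hx : x ∈ Om \ T
  · rw [bellman_of_mem_diff hx, bellman_of_mem_diff hx]
    refine abs_csSup_image_sub_csSup_image_le hU (bddAbove_discounted_image (hcδ x hx) hv)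
      (bddAbove_discounted_image (hcδ x hx) hw) fun u hu => ?_
    rw [← mul_sub]
    exact (abs_exp_neg_mul_le_of_le (hcδ x hx u hu)).trans
      (by gcongr; exact abs_extendByOne_sub_le hK hK0 _)
  · by_cases hxT : x ∈ T
    · simpa [bellman, hxT] using hRHS
    · have hxOm : x ∉ Om := fun h => hx ⟨h, hxT⟩
      simpa [bellman, hxT, hxOm] using hRHS

end Bellman

theorem bellman_contraction_estimate_general {s d : ℕ}
    (Om T : Set (EuclideanSpace ℝ (Fin s))) (U : Set (EuclideanSpace ℝ (Fin d)))
    (hUne : U.Nonempty)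
    (f : EuclideanSpace ℝ (Fin s) → EuclideanSpace ℝ (Fin d) → EuclideanSpace ℝ (Fin s))
    (c : EuclideanSpace ℝ (Fin s) → EuclideanSpace ℝ (Fin d) → ℝ)
    (δ : ℝ)
    (hcδ : ∀ x ∈ Om \ T, ∀ u ∈ U, δ ≤ c x u)
    (v w : EuclideanSpace ℝ (Fin s) → ℝ)
    (hv : ∃ M, ∀ x, |v x| ≤ M) (hw : ∃ M, ∀ x, |w x| ≤ M) :
    (⨆ x, |bellman Om T U f c v x - bellman Om T U f c w x|) ≤
      Real.exp (-δ) * ⨆ x, |v x - w x| := by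
  obtain ⟨Mv, hMv⟩ := hv
  obtain ⟨Mw, hMw⟩ := hw
  have hbdd : BddAbove (range fun x => |v x - w x|) := by
    refine ⟨Mv + Mw, ?_⟩
    rintro _ ⟨x, rfl⟩
    exact (abs_sub _ _).trans (add_le_add (hMv x) (hMw x))
  exact ciSup_le (abs_bellman_sub_le hUne hcδ hMv hMw (le_ciSup hbdd))

/-- the Bellman operator is Lipschitz with constant `e^{-δ} < 1`
in the supremum norm on bounded functions. -/
theorem bellman_contraction_estimate {s d : ℕ}
    (Om T : Set (EuclideanSpace ℝ (Fin s))) (U : Set (EuclideanSpace ℝ (Fin d)))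
    (hOm : IsCompact Om) (hU : IsCompact U) (hUne : U.Nonempty)
    (hT : IsCompact T) (hTOm : T ⊆ Om)
    (f : EuclideanSpace ℝ (Fin s) → EuclideanSpace ℝ (Fin d) → EuclideanSpace ℝ (Fin s))
    (hf : ContinuousOn (fun p => f p.1 p.2) (Om ×ˢ U))
    (hfm : ∀ x ∈ Om, ∀ u ∈ U, f x u ∈ Om)
    (c : EuclideanSpace ℝ (Fin s) → EuclideanSpace ℝ (Fin d) → ℝ)
    (hc : ContinuousOn (fun p => c p.1 p.2) (Om ×ˢ U))
    (hc0 : ∀ x ∈ Om, ∀ u ∈ U, 0 ≤ c x u)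
    (δ : ℝ) (hδ : 0 < δ)
    (hcδ : ∀ x ∈ Om \ T, ∀ u ∈ U, δ ≤ c x u)
    (v w : EuclideanSpace ℝ (Fin s) → ℝ)
    (hv : ∃ M, ∀ x, |v x| ≤ M) (hw : ∃ M, ∀ x, |w x| ≤ M) :
    (⨆ x, |bellman Om T U f c v x - bellman Om T U f c w x|) ≤
      Real.exp (-δ) * ⨆ x, |v x - w x| :=
  bellman_contraction_estimate_general Om T U hUne f c δ hcδ v w hv hw
end

section
/- If v : Ω → ℝ is Lipschitz continuous with Lipschitz constant L_v, and the Shepard weight function is w(ξ, x) = φ^σ(‖ξ − x‖₂) for a nonnegative shape function φ^σ : [0,∞) → [0,∞) with φ^σ(r) = 0 for all r ≥ ρ/σ (σ, ρ > 0), then ‖v − Sv‖_∞ = sup_{x∈Ω} |v(x) − Sv(x)| ≤ L_v · ρ/σ. In particular, for σ = C_σ/h with constants C_σ, h > 0 one obtains ‖v − Sv‖_∞ ≤ L_v (ρ/C_σ) h. -/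
/-!
`v x - Sv x = ∑ᵢ (v x - v xᵢ) ψᵢ(x)` is an average of the differences `v x - v xᵢ` with weights
`ψᵢ(x) ≥ 0` summing to one. A node contributes only if `φ(‖xᵢ - x‖) ≠ 0`, i.e. if
`‖xᵢ - x‖ < ρ/σ`, and for such nodes the Lipschitz bound gives `|v x - v xᵢ| ≤ L_v ρ/σ`.
-/

/-- The Shepard approximation operator. -/
noncomputable def shepard {s : ℕ} (n : ℕ) (nodes : Fin n → EuclideanSpace ℝ (Fin s))
    (w : EuclideanSpace ℝ (Fin s) → EuclideanSpace ℝ (Fin s) → ℝ)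
    (v : EuclideanSpace ℝ (Fin s) → ℝ) :
    EuclideanSpace ℝ (Fin s) → ℝ :=
  fun x => ∑ i, v (nodes i) * (w (nodes i) x / ∑ j, w (nodes j) x)

open Finset

theorem abs_sum_mul_le_of_sum_eq_one {ι K : Type*} [Ring K] [LinearOrder K]
    [IsStrictOrderedRing K] (t : Finset ι) (a c : ι → K) {ε : K}
    (hc : ∀ i ∈ t, 0 ≤ c i) (hsum : ∑ i ∈ t, c i = 1)
    (ha : ∀ i ∈ t, c i ≠ 0 → |a i| ≤ ε) :
    |∑ i ∈ t, a i * c i| ≤ ε :=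
  calc |∑ i ∈ t, a i * c i|
      ≤ ∑ i ∈ t, |a i| * c i := by
        refine (abs_sum_le_sum_abs _ _).trans_eq (sum_congr rfl fun i hi => ?_)
        rw [abs_mul, abs_of_nonneg (hc i hi)]
    _ ≤ ∑ i ∈ t, ε * c i := by
        refine sum_le_sum fun i hi => ?_
        rcases eq_or_ne (c i) 0 with hci | hci
        · simp [hci]
        · exact mul_le_mul_of_nonneg_right (ha i hi hci) (hc i hi)
    _ = ε := by rw [← mul_sum, hsum, mul_one]

section Shepard

variable {s n : ℕ} (nodes : Fin n → EuclideanSpace ℝ (Fin s))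
  (w : EuclideanSpace ℝ (Fin s) → EuclideanSpace ℝ (Fin s) → ℝ)

theorem sum_shepard_basis_eq_one {x : EuclideanSpace ℝ (Fin s)}
    (hx : ∑ j, w (nodes j) x ≠ 0) :
    ∑ i, w (nodes i) x / ∑ j, w (nodes j) x = 1 := by
  rw [← sum_div, div_self hx]

theorem sub_shepard_eq_sum (v : EuclideanSpace ℝ (Fin s) → ℝ) {x : EuclideanSpace ℝ (Fin s)}
    (hx : ∑ j, w (nodes j) x ≠ 0) :
    v x - shepard n nodes w v x =
      ∑ i, (v x - v (nodes i)) * (w (nodes i) x / ∑ j, w (nodes j) x) := by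
  conv_lhs => rw [← mul_one (v x), ← sum_shepard_basis_eq_one nodes w hx, mul_sum]
  simp only [shepard, sub_mul, sum_sub_distrib]

theorem abs_sub_shepard_le (v : EuclideanSpace ℝ (Fin s) → ℝ) {x : EuclideanSpace ℝ (Fin s)}
    {ε : ℝ} (hw : ∀ i, 0 ≤ w (nodes i) x) (hx : 0 < ∑ j, w (nodes j) x)
    (hv : ∀ i, w (nodes i) x ≠ 0 → |v x - v (nodes i)| ≤ ε) :
    |v x - shepard n nodes w v x| ≤ ε := by
  rw [sub_shepard_eq_sum nodes w v hx.ne']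
  refine abs_sum_mul_le_of_sum_eq_one _ _ _ (fun i _ => div_nonneg (hw i) hx.le)
    (sum_shepard_basis_eq_one nodes w hx.ne') fun i _ hi => hv i ?_
  exact left_ne_zero_of_mul (by simpa [div_eq_mul_inv] using hi)

end Shepard

theorem shepard_lipschitz_error_general {s : ℕ} (Om : Set (EuclideanSpace ℝ (Fin s)))
    (n : ℕ) (hn : 0 < n)
    (nodes : Fin n → EuclideanSpace ℝ (Fin s)) (hnodes : ∀ i, nodes i ∈ Om)
    (φ : ℝ → ℝ) (σ ρ : ℝ)
    (hφ0 : ∀ r, 0 ≤ φ r) (hφsupp : ∀ r, ρ / σ ≤ r → φ r = 0)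
    (hpos : ∀ x ∈ Om, 0 < ∑ j, φ ‖nodes j - x‖)
    (v : EuclideanSpace ℝ (Fin s) → ℝ) (Lv : ℝ) (hLv : 0 ≤ Lv)
    (hlip : ∀ x ∈ Om, ∀ y ∈ Om, |v x - v y| ≤ Lv * ‖x - y‖) :
    (⨆ x : Om, |v x - shepard n nodes (fun ξ y => φ ‖ξ - y‖) v x|) ≤ Lv * (ρ / σ) ∧
    ∀ Cσ h : ℝ, 0 < Cσ → 0 < h → σ = Cσ / h →
      (⨆ x : Om, |v x - shepard n nodes (fun ξ y => φ ‖ξ - y‖) v x|) ≤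
        Lv * (ρ / Cσ) * h := by
  have : Nonempty Om := ⟨⟨nodes ⟨0, hn⟩, hnodes _⟩⟩
  have hmain : (⨆ x : Om, |v x - shepard n nodes (fun ξ y => φ ‖ξ - y‖) v x|) ≤
      Lv * (ρ / σ) := by
    refine ciSup_le fun ⟨x, hx⟩ => abs_sub_shepard_le _ _ v (fun i => hφ0 _) (hpos x hx)
      fun i hi => ?_
    have hnear : ‖nodes i - x‖ < ρ / σ := not_le.mp (mt (hφsupp _) hi)
    calc |v x - v (nodes i)| ≤ Lv * ‖nodes i - x‖ := by
          simpa [norm_sub_rev] using hlip x hx _ (hnodes i)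
      _ ≤ Lv * (ρ / σ) := mul_le_mul_of_nonneg_left hnear.le hLv
  refine ⟨hmain, fun Cσ h _ _ hσ => hmain.trans_eq ?_⟩
  rw [hσ, div_div_eq_mul_div]
  ring

/-- if `v` is Lipschitz with constant `L_v` and the Shepard weight is
`w(ξ,x) = φ^σ(‖ξ - x‖₂)` with a nonnegative shape function vanishing on `[ρ/σ, ∞)`,
then `‖v - Sv‖_∞ ≤ L_v ρ/σ`; in particular for `σ = C_σ/h` one gets
`‖v - Sv‖_∞ ≤ L_v (ρ/C_σ) h`. -/
theorem shepard_lipschitz_error {s : ℕ} (Om : Set (EuclideanSpace ℝ (Fin s)))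
    (n : ℕ) (hn : 0 < n)
    (nodes : Fin n → EuclideanSpace ℝ (Fin s)) (hnodes : ∀ i, nodes i ∈ Om)
    (φ : ℝ → ℝ) (σ ρ : ℝ) (hσ : 0 < σ) (hρ : 0 < ρ)
    (hφ0 : ∀ r, 0 ≤ φ r) (hφsupp : ∀ r, ρ / σ ≤ r → φ r = 0)
    (hpos : ∀ x ∈ Om, 0 < ∑ j, φ ‖nodes j - x‖)
    (v : EuclideanSpace ℝ (Fin s) → ℝ) (Lv : ℝ) (hLv : 0 ≤ Lv)
    (hlip : ∀ x ∈ Om, ∀ y ∈ Om, |v x - v y| ≤ Lv * ‖x - y‖) :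
    (⨆ x : Om, |v x - shepard n nodes (fun ξ y => φ ‖ξ - y‖) v x|) ≤ Lv * (ρ / σ) ∧
    ∀ Cσ h : ℝ, 0 < Cσ → 0 < h → σ = Cσ / h →
      (⨆ x : Om, |v x - shepard n nodes (fun ξ y => φ ‖ξ - y‖) v x|) ≤
        Lv * (ρ / Cσ) * h :=
  shepard_lipschitz_error_general Om n hn nodes hnodes φ σ ρ hφ0 hφsupp hpos v Lv hLv hlip
end

section
/- Suppose D_C = {x ∈ S : Ṽ(x) < C} ⊆ R_η for some C > 0 and η ∈ (0,1), and f(x, ũ(x)) ∈ S for all x ∈ D_C. Then for any x₀ ∈ D_C, the trajectory of the closed-loop system x_{j+1} = f(x_j, ũ(x_j)), j = 0, 1, 2, …, remains in D_C for all j, provided c(x, ũ(x)) > 0 for all x ∈ D_C. -/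
/-! On `D_C` the residual bound reads `c̃(x) + Ṽ(x⁺) - Ṽ(x) ≤ η c̃(x)`, where `x⁺ = f(x, ũ(x))`,
so `Ṽ(x⁺) ≤ Ṽ(x) - (1 - η) c̃(x) < Ṽ(x) < C`. Hence `D_C` is mapped into itself by the closed
loop, and so by all its iterates. -/

open Set

theorem IsMinOn.csInf_setOf_exists_eq {α β : Type*} [ConditionallyCompleteLattice α]
    {U : Set β} {g : β → α} {u₀ : β} (hmin : IsMinOn g U u₀) (hu₀ : u₀ ∈ U) :
    sInf {y | ∃ u ∈ U, y = g u} = g u₀ :=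
  IsLeast.csInf_eq ⟨⟨u₀, hu₀, rfl⟩, by rintro _ ⟨u, hu, rfl⟩; exact isMinOn_iff.mp hmin u hu⟩

theorem lt_of_bellman_residual_le {v v' c η : ℝ} (hres : c + v' - v ≤ η * c) (hη : η < 1)
    (hc : 0 < c) : v' < v := by
  have : η * c < c := mul_lt_of_lt_one_left hc hη
  linarith

theorem closed_loop_invariance_general {s d : ℕ}
    (S : Set (EuclideanSpace ℝ (Fin s))) (U : Set (EuclideanSpace ℝ (Fin d)))
    (f : EuclideanSpace ℝ (Fin s) → EuclideanSpace ℝ (Fin d) → EuclideanSpace ℝ (Fin s))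
    (c : EuclideanSpace ℝ (Fin s) → EuclideanSpace ℝ (Fin d) → ℝ)
    -- the approximate value function Ṽ ≥ 0 on S and the feedback ũ
    (Vt : EuclideanSpace ℝ (Fin s) → ℝ)
    (ut : EuclideanSpace ℝ (Fin s) → EuclideanSpace ℝ (Fin d))
    (hutU : ∀ x ∈ S, ut x ∈ U)
    -- ũ(x) attains the infimum inf_{u ∈ U} { c(x,u) + Ṽ(f(x,u)) }
    (hopt : ∀ x ∈ S, ∀ u ∈ U, c x (ut x) + Vt (f x (ut x)) ≤ c x u + Vt (f x u))
    (C η : ℝ) (hη1 : η < 1)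
    -- D_C ⊆ R_η, where e(x) = inf_{u∈U} {c(x,u) + Ṽ(f(x,u))} - Ṽ(x) ≤ η c̃(x) on R_η
    (hDR : ∀ x ∈ S, Vt x < C →
      sInf {y : ℝ | ∃ u ∈ U, y = c x u + Vt (f x u)} - Vt x ≤ η * c x (ut x))
    -- the closed loop map sends D_C into S, and the stage cost is positive on D_C
    (hfS : ∀ x ∈ S, Vt x < C → f x (ut x) ∈ S)
    (hcpos : ∀ x ∈ S, Vt x < C → 0 < c x (ut x))
    (x₀ : EuclideanSpace ℝ (Fin s)) (hx₀S : x₀ ∈ S) (hx₀C : Vt x₀ < C) :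
    ∀ j : ℕ,
      (fun x => f x (ut x))^[j] x₀ ∈ S ∧ Vt ((fun x => f x (ut x))^[j] x₀) < C := by
  have hmaps : MapsTo (fun x => f x (ut x)) {x | x ∈ S ∧ Vt x < C} {x | x ∈ S ∧ Vt x < C} := by
    rintro x ⟨hxS, hxC⟩
    have hmin : IsMinOn (fun u => c x u + Vt (f x u)) U (ut x) :=
      isMinOn_iff.mpr (hopt x hxS)
    have hres := hDR x hxS hxC
    rw [hmin.csInf_setOf_exists_eq (hutU x hxS)] at hres
    exact ⟨hfS x hxS hxC, (lt_of_bellman_residual_le hres hη1 (hcpos x hxS hxC)).trans hxC⟩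
  exact fun j => hmaps.iterate j ⟨hx₀S, hx₀C⟩

/-- if the sublevel set `D_C = {x ∈ S : Ṽ(x) < C}` is contained in
`R_η` and the closed loop map sends `D_C` into `S`, then closed-loop trajectories
starting in `D_C` remain in `D_C`. -/
theorem closed_loop_invariance {s d : ℕ}
    (Om S : Set (EuclideanSpace ℝ (Fin s))) (U : Set (EuclideanSpace ℝ (Fin d)))
    (hOm : IsCompact Om) (hU : IsCompact U) (hSOm : S ⊆ Om)
    (f : EuclideanSpace ℝ (Fin s) → EuclideanSpace ℝ (Fin d) → EuclideanSpace ℝ (Fin s))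
    (hf : ContinuousOn (fun p => f p.1 p.2) (Om ×ˢ U))
    (hfm : ∀ x ∈ Om, ∀ u ∈ U, f x u ∈ Om)
    (c : EuclideanSpace ℝ (Fin s) → EuclideanSpace ℝ (Fin d) → ℝ)
    (hc : ContinuousOn (fun p => c p.1 p.2) (Om ×ˢ U))
    (hc0 : ∀ x ∈ Om, ∀ u ∈ U, 0 ≤ c x u)
    -- the approximate value function Ṽ ≥ 0 on S and the feedback ũ
    (Vt : EuclideanSpace ℝ (Fin s) → ℝ) (hVt0 : ∀ x ∈ S, 0 ≤ Vt x)
    (ut : EuclideanSpace ℝ (Fin s) → EuclideanSpace ℝ (Fin d))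
    (hutU : ∀ x ∈ S, ut x ∈ U)
    -- ũ(x) attains the infimum inf_{u ∈ U} { c(x,u) + Ṽ(f(x,u)) }
    (hopt : ∀ x ∈ S, ∀ u ∈ U, c x (ut x) + Vt (f x (ut x)) ≤ c x u + Vt (f x u))
    (C η : ℝ) (hC : 0 < C) (hη0 : 0 < η) (hη1 : η < 1)
    -- D_C ⊆ R_η, where e(x) = inf_{u∈U} {c(x,u) + Ṽ(f(x,u))} - Ṽ(x) ≤ η c̃(x) on R_η
    (hDR : ∀ x ∈ S, Vt x < C →
      sInf {y : ℝ | ∃ u ∈ U, y = c x u + Vt (f x u)} - Vt x ≤ η * c x (ut x))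
    -- the closed loop map sends D_C into S, and the stage cost is positive on D_C
    (hfS : ∀ x ∈ S, Vt x < C → f x (ut x) ∈ S)
    (hcpos : ∀ x ∈ S, Vt x < C → 0 < c x (ut x))
    (x₀ : EuclideanSpace ℝ (Fin s)) (hx₀S : x₀ ∈ S) (hx₀C : Vt x₀ < C) :
    ∀ j : ℕ,
      (fun x => f x (ut x))^[j] x₀ ∈ S ∧ Vt ((fun x => f x (ut x))^[j] x₀) < C :=
  closed_loop_invariance_general S U f c Vt ut hutU hopt C η hη1 hDR hfS hcpos x₀ hx₀S hx₀C
end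

section
/- Under the hypotheses of the pseudo-contraction lemma with (x,u) = (0,0): if additionally f(0,0) = 0, Ω₂ = {x ∈ ℝ^s : ‖x‖_a ≤ r} ⊆ Ω₁ is a closed sublevel set of the norm ‖·‖_a, and F̄ x̃ ∈ U₁ for all x̃ ∈ Ω₂, then the closed-loop map g(x̃) = f(x̃, F̄ x̃) maps Ω₂ into Ω₂ and satisfies ‖g(x̃) − g(ỹ)‖_a ≤ (1 − ε) ‖x̃ − ỹ‖_a for all x̃, ỹ ∈ Ω₂; in particular g is a contraction of Ω₂ with respect to ‖·‖_a with fixed point 0. -/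
/-!
The derivative of the closed-loop map `g x = f (x, F̄ x)` is `∂ₓf + ∂ᵤf ∘ F̄`, which is a
`(1 - ε)`-contraction for `‖·‖_a` on `Ω₂`. Since `Ω₂` is a ball of `‖·‖_a`, it is convex, so the
mean value inequality along segments (with `‖·‖_a` installed as the norm of the target) makes `g`
`(1 - ε)`-Lipschitz on `Ω₂`. As `g 0 = f (0, 0) = 0`, comparing with `0` gives
`‖g x‖_a ≤ (1 - ε) ‖x‖_a ≤ r`, i.e. `g` maps `Ω₂` into itself.
-/

open Set

/-- A copy of `F` without its norm, on which a definite seminorm can be installed as the norm. -/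
def Renormed (F : Type*) : Type _ := F

instance {F : Type*} [AddCommGroup F] : AddCommGroup (Renormed F) :=
  inferInstanceAs (AddCommGroup F)

instance {F : Type*} [AddCommGroup F] [Module ℝ F] : Module ℝ (Renormed F) :=
  inferInstanceAs (Module ℝ F)

theorem Convex.seminorm_image_sub_le_of_hasFDerivWithin_apply_le
    {E F : Type*} [NormedAddCommGroup E] [NormedSpace ℝ E]
    [NormedAddCommGroup F] [NormedSpace ℝ F] [FiniteDimensional ℝ F]
    (q : Seminorm ℝ F) (hq : ∀ v, q v = 0 → v = 0)
    {s : Set E} (hs : Convex ℝ s) {g : E → F} {g' : E → E →L[ℝ] F}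
    (hg : ∀ z ∈ s, HasFDerivWithinAt g (g' z) s z) {x y : E} (hx : x ∈ s) (hy : y ∈ s)
    {C : ℝ} (bound : ∀ z ∈ s, q (g' z (y - x)) ≤ C) : q (g y - g x) ≤ C := by
  let _ : NormedAddCommGroup (Renormed F) :=
    AddGroupNorm.toNormedAddCommGroup { q.toAddGroupSeminorm with eq_zero_of_map_eq_zero' := hq }
  let _ : NormedSpace ℝ (Renormed F) := ⟨fun c v => (map_smul_eq_mul q c v).le⟩
  let ι : F →L[ℝ] Renormed F := LinearMap.toContinuousLinearMap LinearMap.id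
  set γ := (AffineMap.lineMap x y : ℝ → E)
  have hγ : MapsTo γ (Icc 0 1) s := hs.mapsTo_lineMap hx hy
  have hD : ∀ t ∈ Icc (0 : ℝ) 1,
      HasDerivWithinAt (ι ∘ g ∘ γ) (ι (g' (γ t) (y - x))) (Icc 0 1) t := fun t ht => by
    simpa using ι.hasFDerivAt.comp_hasDerivWithinAt t
      ((hg (γ t) (hγ ht)).comp_hasDerivWithinAt t AffineMap.hasDerivWithinAt_lineMap hγ)
  have hι : ‖ι (g y) - ι (g x)‖ ≤ C := by
    simpa [γ] using norm_image_sub_le_of_norm_deriv_le_segment_01' hD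
      fun t ht => bound _ (hγ (Ico_subset_Icc_self ht))
  exact hι

theorem closed_loop_contraction_general {s d : ℕ}
    (na : EuclideanSpace ℝ (Fin s) → ℝ)
    (hna_add : ∀ x y, na (x + y) ≤ na x + na y)
    (hna_smul : ∀ (r : ℝ) x, na (r • x) = |r| * na x)
    (hna_def : ∀ x, na x = 0 ↔ x = 0)
    (Om : Set (EuclideanSpace ℝ (Fin s))) (U : Set (EuclideanSpace ℝ (Fin d)))
    (hOm : IsOpen Om) (hU : IsOpen U)
    (f : EuclideanSpace ℝ (Fin s) × EuclideanSpace ℝ (Fin d) → EuclideanSpace ℝ (Fin s))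
    (hf : ContDiffOn ℝ 1 f (Om ×ˢ U))
    (hf00 : f (0, 0) = 0)
    (Fb : EuclideanSpace ℝ (Fin s) →L[ℝ] EuclideanSpace ℝ (Fin d))
    (Om₁ : Set (EuclideanSpace ℝ (Fin s))) (U₁ : Set (EuclideanSpace ℝ (Fin d)))
    (hOm₁ : Om₁ ⊆ Om) (hU₁ : U₁ ⊆ U)
    (ε : ℝ) (hε : 0 < ε)
    (hM : ∀ y ∈ Om₁, ∀ w ∈ U₁, ∀ z,
      na (fderiv ℝ f (y, w) (z, Fb z)) ≤ (1 - ε) * na z)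
    (r : ℝ)
    (Om₂ : Set (EuclideanSpace ℝ (Fin s)))
    (hOm₂def : Om₂ = {x | na x ≤ r}) (hOm₂ : Om₂ ⊆ Om₁)
    (hu : ∀ xt ∈ Om₂, Fb xt ∈ U₁) :
    (∀ xt ∈ Om₂, f (xt, Fb xt) ∈ Om₂) ∧
    (∀ xt ∈ Om₂, ∀ yt ∈ Om₂,
      na (f (xt, Fb xt) - f (yt, Fb yt)) ≤ (1 - ε) * na (xt - yt)) ∧
    f (0, Fb 0) = 0 := by
  let p : Seminorm ℝ (EuclideanSpace ℝ (Fin s)) := Seminorm.of na hna_add hna_smul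
  have hOm₂_ball : Om₂ = p.closedBall 0 r := by rw [hOm₂def, p.closedBall_zero_eq]; rfl
  have hg0 : f (0, Fb 0) = 0 := by rwa [map_zero]
  have hg' : ∀ z ∈ Om₂, HasFDerivAt (fun x => f (x, Fb x))
      ((fderiv ℝ f (z, Fb z)).comp ((ContinuousLinearMap.id ℝ _).prod Fb)) z := fun z hz =>
    have hzU : (z, Fb z) ∈ Om ×ˢ U := ⟨hOm₁ (hOm₂ hz), hU₁ (hu z hz)⟩
    ((hf.contDiffAt ((hOm.prod hU).mem_nhds hzU)).differentiableAt one_ne_zero).hasFDerivAt.comp z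
      ((ContinuousLinearMap.id ℝ _).prod Fb).hasFDerivAt
  have hcontr : ∀ xt ∈ Om₂, ∀ yt ∈ Om₂,
      na (f (xt, Fb xt) - f (yt, Fb yt)) ≤ (1 - ε) * na (xt - yt) := fun xt hxt yt hyt =>
    (hOm₂_ball ▸ p.convex_closedBall 0 r).seminorm_image_sub_le_of_hasFDerivWithin_apply_le p
      (fun v => (hna_def v).1) (fun z hz => (hg' z hz).hasFDerivWithinAt) hyt hxt
      fun z hz => hM z (hOm₂ hz) (Fb z) (hu z hz) (xt - yt)
  refine ⟨fun xt hxt => ?_, hcontr, hg0⟩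
  have hxt_le : na xt ≤ r := by rwa [hOm₂def] at hxt
  have hxt_nonneg : 0 ≤ na xt := apply_nonneg p xt
  have h0 : (0 : EuclideanSpace ℝ (Fin s)) ∈ Om₂ := by
    rw [hOm₂_ball]; exact p.mem_closedBall_self (hxt_nonneg.trans hxt_le)
  have hshrink := hcontr xt hxt 0 h0
  rw [hg0, sub_zero, sub_zero] at hshrink
  rw [hOm₂def]
  calc na (f (xt, Fb xt)) ≤ (1 - ε) * na xt := hshrink
    _ ≤ na xt := mul_le_of_le_one_left hxt_nonneg (by linarith)
    _ ≤ r := hxt_le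

/-- under the hypotheses of the pseudo-contraction lemma with
`(x,u) = (0,0)`, if `f(0,0) = 0`, `Ω₂ = {x : ‖x‖_a ≤ r} ⊆ Ω₁` is a closed norm
ball and `F̄ x̃ ∈ U₁` for `x̃ ∈ Ω₂`, then the closed-loop map `g(x̃) = f(x̃, F̄ x̃)`
maps `Ω₂` into itself, is a `(1-ε)`-contraction on `Ω₂` with respect to `‖·‖_a`,
and has `0` as fixed point. -/
theorem closed_loop_contraction {s d : ℕ}
    (na : EuclideanSpace ℝ (Fin s) → ℝ)
    (hna_add : ∀ x y, na (x + y) ≤ na x + na y)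
    (hna_smul : ∀ (r : ℝ) x, na (r • x) = |r| * na x)
    (hna_def : ∀ x, na x = 0 ↔ x = 0)
    (Om : Set (EuclideanSpace ℝ (Fin s))) (U : Set (EuclideanSpace ℝ (Fin d)))
    (hOm : IsOpen Om) (hU : IsOpen U)
    (f : EuclideanSpace ℝ (Fin s) × EuclideanSpace ℝ (Fin d) → EuclideanSpace ℝ (Fin s))
    (hf : ContDiffOn ℝ 1 f (Om ×ˢ U))
    (hf00 : f (0, 0) = 0)
    (Fb : EuclideanSpace ℝ (Fin s) →L[ℝ] EuclideanSpace ℝ (Fin d))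
    (Om₁ : Set (EuclideanSpace ℝ (Fin s))) (U₁ : Set (EuclideanSpace ℝ (Fin d)))
    (hOm₁ : Om₁ ⊆ Om) (hU₁ : U₁ ⊆ U)
    (ε : ℝ) (hε : 0 < ε)
    (hM : ∀ y ∈ Om₁, ∀ w ∈ U₁, ∀ z,
      na (fderiv ℝ f (y, w) (z, Fb z)) ≤ (1 - ε) * na z)
    (r : ℝ) (hr : 0 ≤ r)
    (Om₂ : Set (EuclideanSpace ℝ (Fin s)))
    (hOm₂def : Om₂ = {x | na x ≤ r}) (hOm₂ : Om₂ ⊆ Om₁)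
    (hu : ∀ xt ∈ Om₂, Fb xt ∈ U₁) :
    (∀ xt ∈ Om₂, f (xt, Fb xt) ∈ Om₂) ∧
    (∀ xt ∈ Om₂, ∀ yt ∈ Om₂,
      na (f (xt, Fb xt) - f (yt, Fb yt)) ≤ (1 - ε) * na (xt - yt)) ∧
    f (0, Fb 0) = 0 :=
  closed_loop_contraction_general na hna_add hna_smul hna_def Om U hOm hU f hf hf00 Fb Om₁ U₁ hOm₁
    hU₁ ε hε hM r Om₂ hOm₂def hOm₂ hu
end

section
/- Let Ω ⊂ ℝ^s be compact, U ⊂ ℝ^d compact, f : Ω × U → Ω continuous, and c : Ω × U → [0,∞) continuous (hence bounded). For x₀ ∈ Ω and a control sequence (u_k) ∈ U^ℕ define the trajectory x_{k+1} = f(x_k, u_k), the total cost J(x₀,(u_k)) = Σ_{k=0}^∞ c(x_k, u_k) ∈ [0,∞], and the optimal value function V(x₀) = inf_{(u_k)} J(x₀,(u_k)). Suppose there is an open neighborhood N ⊆ Ω of 0 on which V is bounded, and that for every x₀ ∈ Ω there exist a finite control sequence and a number of steps k₁ steering x₀ into N (i.e. the corresponding trajectory satisfies x_{k₁} ∈ N).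 Then V is bounded on Ω, i.e. sup_{x ∈ Ω} V(x) < ∞. -/
/-!
Cover `Om` by finitely many neighbourhoods on each of which a single control steers every point
into `N` (the trajectory at a fixed time is continuous in the initial point and `N` is open).
This bounds the number of steps needed to reach `N` uniformly by some `K`. Every step costs at
most a bound `C` of `c` on the compact set `Om ×ˢ U`, so dynamic programming gives
`V x ≤ K * C + sup_N V` for every `x ∈ Om`.
-/

open scoped ENNReal

/-- The trajectory of the discrete time control system `x_{k+1} = f(x_k, u_k)`
starting at `x₀` under the control sequence `u`. -/
def traj {s d : ℕ}
    (f : EuclideanSpace ℝ (Fin s) → EuclideanSpace ℝ (Fin d) → EuclideanSpace ℝ (Fin s))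
    (x₀ : EuclideanSpace ℝ (Fin s)) (u : ℕ → EuclideanSpace ℝ (Fin d)) : ℕ → EuclideanSpace ℝ (Fin s)
  | 0 => x₀
  | k + 1 => f (traj f x₀ u k) (u k)

/-- The optimal value function: the infimum, over all control sequences with
values in `U`, of the accumulated infinite-horizon cost. -/
noncomputable def valueFn {s d : ℕ} (U : Set (EuclideanSpace ℝ (Fin d)))
    (f : EuclideanSpace ℝ (Fin s) → EuclideanSpace ℝ (Fin d) → EuclideanSpace ℝ (Fin s))
    (c : EuclideanSpace ℝ (Fin s) → EuclideanSpace ℝ (Fin d) → ℝ)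
    (x₀ : EuclideanSpace ℝ (Fin s)) : ℝ≥0∞ :=
  ⨅ (u : ℕ → EuclideanSpace ℝ (Fin d)) (_ : ∀ k, u k ∈ U),
    ∑' k : ℕ, ENNReal.ofReal (c (traj f x₀ u k) (u k))

section

variable {s d : ℕ}
  {f : EuclideanSpace ℝ (Fin s) → EuclideanSpace ℝ (Fin d) → EuclideanSpace ℝ (Fin s)}
  {Om : Set (EuclideanSpace ℝ (Fin s))} {U : Set (EuclideanSpace ℝ (Fin d))}
  {c : EuclideanSpace ℝ (Fin s) → EuclideanSpace ℝ (Fin d) → ℝ}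

lemma traj_congr (x₀ : EuclideanSpace ℝ (Fin s)) {u v : ℕ → EuclideanSpace ℝ (Fin d)} {k : ℕ}
    (h : ∀ i < k, u i = v i) : traj f x₀ u k = traj f x₀ v k := by
  induction k with
  | zero => rfl
  | succ k ih => simp only [traj, ih fun i hi => h i (by omega), h k k.lt_succ_self]

lemma traj_add (x₀ : EuclideanSpace ℝ (Fin s)) (u : ℕ → EuclideanSpace ℝ (Fin d)) (k j : ℕ) :
    traj f x₀ u (k + j) = traj f (traj f x₀ u k) (fun i => u (k + i)) j := by
  induction j with
  | zero => rfl
  | succ j ih =>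
    show f (traj f x₀ u (k + j)) (u (k + j)) = _
    rw [ih]
    rfl

lemma traj_mem (hfm : ∀ x ∈ Om, ∀ a ∈ U, f x a ∈ Om) {x₀ : EuclideanSpace ℝ (Fin s)}
    (hx₀ : x₀ ∈ Om) {u : ℕ → EuclideanSpace ℝ (Fin d)} (hu : ∀ k, u k ∈ U) (k : ℕ) :
    traj f x₀ u k ∈ Om := by
  induction k with
  | zero => exact hx₀
  | succ k ih => exact hfm _ ih _ (hu k)

lemma traj_continuousOn (hf : ContinuousOn (fun p => f p.1 p.2) (Om ×ˢ U))
    (hfm : ∀ x ∈ Om, ∀ a ∈ U, f x a ∈ Om) {u : ℕ → EuclideanSpace ℝ (Fin d)}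
    (hu : ∀ k, u k ∈ U) (k : ℕ) :
    ContinuousOn (fun x => traj f x u k) Om := by
  induction k with
  | zero => exact continuousOn_id
  | succ k ih =>
    exact hf.comp (ih.prodMk continuousOn_const) fun x hx => ⟨traj_mem hfm hx hu k, hu k⟩

lemma valueFn_le_sum_add_valueFn (x₀ : EuclideanSpace ℝ (Fin s))
    {u : ℕ → EuclideanSpace ℝ (Fin d)} (hu : ∀ k, u k ∈ U) (k : ℕ) :
    valueFn U f c x₀ ≤ (∑ i ∈ Finset.range k, ENNReal.ofReal (c (traj f x₀ u i) (u i)))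
      + valueFn U f c (traj f x₀ u k) := by
  simp only [valueFn, ENNReal.add_iInf]
  refine le_iInf₂ fun w hw => ?_
  set v : ℕ → EuclideanSpace ℝ (Fin d) := fun i => if i < k then u i else w (i - k)
  have hv_head : ∀ i < k, v i = u i := fun i hi => if_pos hi
  have hv_tail : (fun i => v (k + i)) = w := funext fun i => by simp [v]
  have hvU : ∀ i, v i ∈ U := fun i => by
    by_cases hi : i < k <;> simp [v, hi, hu i, hw (i - k)]
  have htraj_tail (i : ℕ) : traj f x₀ v (i + k) = traj f (traj f x₀ u k) w i := by
    rw [Nat.add_comm, traj_add, hv_tail, traj_congr x₀ hv_head]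
  refine iInf₂_le_of_le v hvU ?_
  rw [← ENNReal.summable.sum_add_tsum_nat_add' (k := k)]
  gcongr with i hi
  · have hi : i < k := Finset.mem_range.mp hi
    rw [traj_congr x₀ fun j hj => hv_head j (hj.trans hi), hv_head i hi]
  · rw [htraj_tail, ← congrFun hv_tail i, Nat.add_comm]

lemma valueFn_le_mul_add_valueFn (hfm : ∀ x ∈ Om, ∀ a ∈ U, f x a ∈ Om) {C : ℝ}
    (hC : ∀ x ∈ Om, ∀ a ∈ U, c x a ≤ C) {x₀ : EuclideanSpace ℝ (Fin s)} (hx₀ : x₀ ∈ Om)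
    {u : ℕ → EuclideanSpace ℝ (Fin d)} (hu : ∀ k, u k ∈ U) (k : ℕ) :
    valueFn U f c x₀ ≤ k * ENNReal.ofReal C + valueFn U f c (traj f x₀ u k) := by
  refine (valueFn_le_sum_add_valueFn x₀ hu k).trans (add_le_add_left ?_ _)
  calc ∑ i ∈ Finset.range k, ENNReal.ofReal (c (traj f x₀ u i) (u i))
      ≤ ∑ _i ∈ Finset.range k, ENNReal.ofReal C :=
        Finset.sum_le_sum fun i _ =>
          ENNReal.ofReal_le_ofReal (hC _ (traj_mem hfm hx₀ hu i) _ (hu i))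
    _ = k * ENNReal.ofReal C := by simp

def SteersWithin (U : Set (EuclideanSpace ℝ (Fin d))) (f : EuclideanSpace ℝ (Fin s) →
    EuclideanSpace ℝ (Fin d) → EuclideanSpace ℝ (Fin s)) (N : Set (EuclideanSpace ℝ (Fin s)))
    (K : ℕ) (x : EuclideanSpace ℝ (Fin s)) : Prop :=
  ∃ u : ℕ → EuclideanSpace ℝ (Fin d), (∀ i, u i ∈ U) ∧ ∃ k ≤ K, traj f x u k ∈ N

lemma SteersWithin.mono {N : Set (EuclideanSpace ℝ (Fin s))} {K K' : ℕ}
    {x : EuclideanSpace ℝ (Fin s)} (h : SteersWithin U f N K x) (hK : K ≤ K') :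
    SteersWithin U f N K' x :=
  let ⟨u, hu, k, hk, hkN⟩ := h
  ⟨u, hu, k, hk.trans hK, hkN⟩

lemma exists_uniform_steering_time (hOm : IsCompact Om)
    (hf : ContinuousOn (fun p => f p.1 p.2) (Om ×ˢ U)) (hfm : ∀ x ∈ Om, ∀ a ∈ U, f x a ∈ Om)
    {N : Set (EuclideanSpace ℝ (Fin s))} (hN : IsOpen N)
    (hsteer : ∀ x₀ ∈ Om, ∃ (u : ℕ → EuclideanSpace ℝ (Fin d)) (k : ℕ),
      (∀ i, u i ∈ U) ∧ traj f x₀ u k ∈ N) :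
    ∃ K : ℕ, ∀ x ∈ Om, SteersWithin U f N K x := by
  refine hOm.induction_on (p := fun t => ∃ K : ℕ, ∀ x ∈ t, SteersWithin U f N K x)
    ⟨0, by simp⟩ ?_ ?_ ?_
  · exact fun t t' hsub ⟨K, hK⟩ => ⟨K, fun x hx => hK x (hsub hx)⟩
  · rintro t t' ⟨K, hK⟩ ⟨K', hK'⟩
    exact ⟨max K K', fun x hx => hx.elim (fun hx => (hK x hx).mono (le_max_left K K'))
      (fun hx => (hK' x hx).mono (le_max_right K K'))⟩
  · intro z hz
    obtain ⟨u, k, hu, hkN⟩ := hsteer z hz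
    exact ⟨_, traj_continuousOn hf hfm hu k z hz (hN.mem_nhds hkN),
      k, fun x hx => ⟨u, hu, k, le_rfl, hx⟩⟩

end

theorem value_function_bounded_general {s d : ℕ}
    (Om : Set (EuclideanSpace ℝ (Fin s))) (U : Set (EuclideanSpace ℝ (Fin d)))
    (hOm : IsCompact Om) (hU : IsCompact U)
    (f : EuclideanSpace ℝ (Fin s) → EuclideanSpace ℝ (Fin d) → EuclideanSpace ℝ (Fin s))
    (hf : ContinuousOn (fun p => f p.1 p.2) (Om ×ˢ U))
    (hfm : ∀ x ∈ Om, ∀ u ∈ U, f x u ∈ Om)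
    (c : EuclideanSpace ℝ (Fin s) → EuclideanSpace ℝ (Fin d) → ℝ)
    (hc : ContinuousOn (fun p => c p.1 p.2) (Om ×ˢ U))
    (N : Set (EuclideanSpace ℝ (Fin s))) (hNopen : IsOpen N)
    -- V is bounded on N
    (hbdN : ∃ M : ℝ, ∀ x ∈ N, valueFn U f c x ≤ ENNReal.ofReal M)
    -- every point of Ω can be steered into N in finitely many steps
    (hsteer : ∀ x₀ ∈ Om, ∃ (u : ℕ → EuclideanSpace ℝ (Fin d)) (k₁ : ℕ),
      (∀ k, u k ∈ U) ∧ traj f x₀ u k₁ ∈ N) :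
    ∃ M : ℝ, ∀ x ∈ Om, valueFn U f c x ≤ ENNReal.ofReal M := by
  obtain ⟨M, hM⟩ := hbdN
  obtain ⟨C, hC⟩ := (hOm.prod hU).exists_bound_of_continuousOn hc
  have hcC : ∀ x ∈ Om, ∀ a ∈ U, c x a ≤ C := fun x hx a ha =>
    (le_abs_self _).trans (hC (x, a) ⟨hx, ha⟩)
  obtain ⟨K, hK⟩ := exists_uniform_steering_time hOm hf hfm hNopen hsteer
  have hB : (K : ℝ≥0∞) * ENNReal.ofReal C + ENNReal.ofReal M ≠ ∞ := by
    simp [ENNReal.mul_eq_top]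
  refine ⟨(K * ENNReal.ofReal C + ENNReal.ofReal M).toReal, fun x hx => ?_⟩
  obtain ⟨u, hu, k, hkK, hkN⟩ := hK x hx
  rw [ENNReal.ofReal_toReal hB]
  calc valueFn U f c x ≤ k * ENNReal.ofReal C + valueFn U f c (traj f x u k) :=
        valueFn_le_mul_add_valueFn hfm hcC hx hu k
    _ ≤ K * ENNReal.ofReal C + ENNReal.ofReal M := by gcongr; exact hM _ hkN

/-- if the optimal value function `V` is bounded on an open
neighborhood `N ⊆ Ω` of `0` and every point of `Ω` can be steered into `N` in
finitely many steps, then `V` is bounded on `Ω`. -/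
theorem value_function_bounded {s d : ℕ}
    (Om : Set (EuclideanSpace ℝ (Fin s))) (U : Set (EuclideanSpace ℝ (Fin d)))
    (hOm : IsCompact Om) (hU : IsCompact U) (h0 : (0 : EuclideanSpace ℝ (Fin s)) ∈ Om)
    (f : EuclideanSpace ℝ (Fin s) → EuclideanSpace ℝ (Fin d) → EuclideanSpace ℝ (Fin s))
    (hf : ContinuousOn (fun p => f p.1 p.2) (Om ×ˢ U))
    (hfm : ∀ x ∈ Om, ∀ u ∈ U, f x u ∈ Om)
    (c : EuclideanSpace ℝ (Fin s) → EuclideanSpace ℝ (Fin d) → ℝ)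
    (hc : ContinuousOn (fun p => c p.1 p.2) (Om ×ˢ U))
    (hc0 : ∀ x ∈ Om, ∀ u ∈ U, 0 ≤ c x u)
    (N : Set (EuclideanSpace ℝ (Fin s))) (hNopen : IsOpen N)
    (h0N : (0 : EuclideanSpace ℝ (Fin s)) ∈ N) (hNOm : N ⊆ Om)
    -- V is bounded on N
    (hbdN : ∃ M : ℝ, ∀ x ∈ N, valueFn U f c x ≤ ENNReal.ofReal M)
    -- every point of Ω can be steered into N in finitely many steps
    (hsteer : ∀ x₀ ∈ Om, ∃ (u : ℕ → EuclideanSpace ℝ (Fin d)) (k₁ : ℕ),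
      (∀ k, u k ∈ U) ∧ traj f x₀ u k₁ ∈ N) :
    ∃ M : ℝ, ∀ x ∈ Om, valueFn U f c x ≤ ENNReal.ofReal M :=
  value_function_bounded_general Om U hOm hU f hf hfm c hc N hNopen hbdN hsteer
end
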